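/- arXiv:1103.4614 — 2 statements merged into one kernel-verified Lean document; each statement's English description precedes it below -/
import Mathlib

section
/- Suppose ΔᵀXᵀXΔ ≥ n·ρ·‖Δ‖₂² for every Δ ∈ ℝ^p, where ρ > 0 (i.e. the smallest eigenvalue of XᵀX/n is at least ρ). Then for every Δ ∈ ℝ^p, every norm-minimizing G-decomposition (v_g)_{g∈G} of Δ, and every subset J ⊆ G, one has √(ΔᵀXᵀXΔ/n) ≥ √(ρ/(M·G_overlap)) · Σ_{g∈J} ‖v_g‖₂. In particular, the restricted eigenvalue condition of the overlapping group lasso holds with κ(s) = √(ρ/(M·G_overlap)) for every integer 1 ≤ s ≤ M. -/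
open Finset

/-- The Euclidean (ℓ2) norm of a vector in ℝ^p. -/
noncomputable def l2norm {p : ℕ} (v : Fin p → ℝ) : ℝ := Real.sqrt (∑ j, v j ^ 2)

/-- A `G`-decomposition of `β`: a family `(v_g)_{g ∈ G}` of vectors with
`supp (v g) ⊆ g` for each `g ∈ G` and `∑_{g ∈ G} v g = β`. -/
def IsDecomp {p : ℕ} (G : Finset (Finset (Fin p))) (β : Fin p → ℝ)
    (v : Finset (Fin p) → Fin p → ℝ) : Prop :=
  (∀ g ∈ G, ∀ j, j ∉ g → v g j = 0) ∧ (∑ g ∈ G, v g) = β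

/-- The overlap norm `‖β‖_{2,1,G}`. -/
noncomputable def overlapNorm {p : ℕ} (G : Finset (Finset (Fin p))) (β : Fin p → ℝ) : ℝ :=
  sInf {r : ℝ | ∃ v, IsDecomp G β v ∧ r = ∑ g ∈ G, l2norm (v g)}

/-- A norm-minimizing `G`-decomposition of `β`. -/
def IsMinDecomp {p : ℕ} (G : Finset (Finset (Fin p))) (β : Fin p → ℝ)
    (v : Finset (Fin p) → Fin p → ℝ) : Prop :=
  IsDecomp G β v ∧ ∑ g ∈ G, l2norm (v g) = overlapNorm G β

/-- `G_overlap`: the maximal number of groups of `G` containing any single index. -/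
def Goverlap {p : ℕ} (G : Finset (Finset (Fin p))) : ℕ :=
  Finset.univ.sup fun j : Fin p => (G.filter fun g => j ∈ g).card

/-! Splitting every coordinate of `Δ` equally among the groups containing it gives a
`G`-decomposition whose group norms have squares summing to at most `‖Δ‖₂²`, so Cauchy–Schwarz
gives `‖Δ‖_{2,1,G} ≤ √M ‖Δ‖₂`. For a norm-minimizing decomposition the sum over `J` is at most
`‖Δ‖_{2,1,G}`, and the eigenvalue bound `ρ ‖Δ‖₂² ≤ ΔᵀXᵀXΔ / n` finishes; since `G_overlap ≥ 1`,
that factor only weakens the constant. -/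

lemma l2norm_nonneg {p : ℕ} (v : Fin p → ℝ) : 0 ≤ l2norm v := Real.sqrt_nonneg _

lemma sq_l2norm {p : ℕ} (v : Fin p → ℝ) : l2norm v ^ 2 = ∑ j, v j ^ 2 :=
  Real.sq_sqrt (sum_nonneg fun _ _ => sq_nonneg _)

lemma overlapNorm_le_of_isDecomp {p : ℕ} {G : Finset (Finset (Fin p))} {β : Fin p → ℝ}
    {v : Finset (Fin p) → Fin p → ℝ} (hv : IsDecomp G β v) :
    overlapNorm G β ≤ ∑ g ∈ G, l2norm (v g) :=
  csInf_le ⟨0, by rintro _ ⟨u, -, rfl⟩; exact sum_nonneg fun _ _ => l2norm_nonneg _⟩ ⟨v, hv, rfl⟩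

lemma IsMinDecomp.sum_l2norm_le_overlapNorm {p : ℕ} {G J : Finset (Finset (Fin p))}
    {β : Fin p → ℝ} {v : Finset (Fin p) → Fin p → ℝ} (hv : IsMinDecomp G β v) (hJ : J ⊆ G) :
    ∑ g ∈ J, l2norm (v g) ≤ overlapNorm G β :=
  hv.2 ▸ sum_le_sum_of_subset_of_nonneg hJ fun _ _ _ => l2norm_nonneg _

lemma sum_le_sqrt_card_mul_sqrt_sum_sq {ι : Type*} (s : Finset ι) (f : ι → ℝ) :
    ∑ i ∈ s, f i ≤ √(#s : ℝ) * √(∑ i ∈ s, f i ^ 2) := by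
  rw [← Real.sqrt_mul (Nat.cast_nonneg _)]
  exact Real.le_sqrt_of_sq_le (sq_sum_le_card_mul_sum_sq ..)

section Averaging

variable {p : ℕ} (G : Finset (Finset (Fin p)))

def coverMultiplicity (j : Fin p) : ℕ := #{g ∈ G | j ∈ g}

lemma one_le_coverMultiplicity (hcover : ∀ i : Fin p, ∃ g ∈ G, i ∈ g) (j : Fin p) :
    1 ≤ coverMultiplicity G j := by
  obtain ⟨g, hg, hjg⟩ := hcover j
  exact card_pos.2 ⟨g, mem_filter.2 ⟨hg, hjg⟩⟩

lemma Goverlap_pos (hp : 0 < p) (hcover : ∀ i : Fin p, ∃ g ∈ G, i ∈ g) : 0 < Goverlap G :=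
  (one_le_coverMultiplicity G hcover ⟨0, hp⟩).trans (le_sup (f := coverMultiplicity G) (mem_univ _))

noncomputable def averagedDecomp (β : Fin p → ℝ) : Finset (Fin p) → Fin p → ℝ :=
  fun g j => if j ∈ g then β j / coverMultiplicity G j else 0

lemma sum_comp_averagedDecomp {f : ℝ → ℝ} (hf : f 0 = 0) (β : Fin p → ℝ) (j : Fin p) :
    ∑ g ∈ G, f (averagedDecomp G β g j) =
      coverMultiplicity G j * f (β j / coverMultiplicity G j) := by
  simp only [averagedDecomp, apply_ite f, hf, ← sum_filter, sum_const, nsmul_eq_mul]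
  rfl

variable {G} (hcover : ∀ i : Fin p, ∃ g ∈ G, i ∈ g) (β : Fin p → ℝ)
include hcover

lemma isDecomp_averagedDecomp : IsDecomp G β (averagedDecomp G β) := by
  refine ⟨fun g _ j hj => if_neg hj, funext fun j => ?_⟩
  have hm : (coverMultiplicity G j : ℝ) ≠ 0 := by
    exact_mod_cast Nat.one_le_iff_ne_zero.1 (one_le_coverMultiplicity G hcover j)
  rw [Finset.sum_apply]
  exact (sum_comp_averagedDecomp G (f := id) rfl β j).trans (mul_div_cancel₀ _ hm)

lemma sum_sq_l2norm_averagedDecomp_le :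
    ∑ g ∈ G, l2norm (averagedDecomp G β g) ^ 2 ≤ l2norm β ^ 2 := by
  simp only [sq_l2norm]
  rw [sum_comm]
  refine sum_le_sum fun j _ => ?_
  have hm : (1 : ℝ) ≤ coverMultiplicity G j := by
    exact_mod_cast one_le_coverMultiplicity G hcover j
  rw [sum_comp_averagedDecomp G (f := (· ^ 2)) (zero_pow two_ne_zero)]
  calc (coverMultiplicity G j : ℝ) * (β j / coverMultiplicity G j) ^ 2
      = β j ^ 2 / coverMultiplicity G j := by field_simp
    _ ≤ β j ^ 2 := div_le_self (sq_nonneg _) hm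

lemma overlapNorm_le_sqrt_card_mul_l2norm : overlapNorm G β ≤ √(#G : ℝ) * l2norm β :=
  calc overlapNorm G β ≤ ∑ g ∈ G, l2norm (averagedDecomp G β g) :=
        overlapNorm_le_of_isDecomp (isDecomp_averagedDecomp hcover β)
    _ ≤ √(#G : ℝ) * √(∑ g ∈ G, l2norm (averagedDecomp G β g) ^ 2) :=
        sum_le_sqrt_card_mul_sqrt_sum_sq _ _
    _ ≤ √(#G : ℝ) * √(l2norm β ^ 2) := by
        gcongr; exact sum_sq_l2norm_averagedDecomp_le hcover β
    _ = √(#G : ℝ) * l2norm β := by rw [Real.sqrt_sq (l2norm_nonneg β)]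

end Averaging

lemma sqrt_mul_l2norm_le_of_min_eigenvalue {p n : ℕ} (hn : 0 < n) (X : Matrix (Fin n) (Fin p) ℝ)
    {ρ : ℝ} (hρ : 0 ≤ ρ)
    (hX : ∀ Δ : Fin p → ℝ, (n : ℝ) * ρ * ∑ j, Δ j ^ 2 ≤ ∑ i, (X.mulVec Δ) i ^ 2)
    (Δ : Fin p → ℝ) : √ρ * l2norm Δ ≤ √((∑ i, (X.mulVec Δ) i ^ 2) / n) := by
  rw [l2norm, ← Real.sqrt_mul hρ]
  refine Real.sqrt_le_sqrt ((le_div_iff₀ (by exact_mod_cast hn)).2 ?_)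
  linarith [hX Δ]

lemma sqrt_div_mul_mul_sqrt_le {ρ M t : ℝ} (hρ : 0 ≤ ρ) (hM : 0 ≤ M) (ht : 1 ≤ t) :
    √(ρ / (M * t)) * √M ≤ √ρ := by
  rw [← Real.sqrt_mul (by positivity)]
  refine Real.sqrt_le_sqrt ?_
  rcases hM.eq_or_lt with rfl | hM
  · simpa using hρ
  · calc ρ / (M * t) * M = ρ / t := by field_simp
      _ ≤ ρ := div_le_self hρ ht

theorem restricted_eigenvalue_from_min_eigenvalue_general {p n : ℕ} (hp : 1 ≤ p) (hn : 1 ≤ n)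
    (G : Finset (Finset (Fin p)))
    (hcover : ∀ i : Fin p, ∃ g ∈ G, i ∈ g)
    (X : Matrix (Fin n) (Fin p) ℝ) (ρ : ℝ) (hρ : 0 < ρ)
    (hX : ∀ Δ : Fin p → ℝ, (n : ℝ) * ρ * ∑ j, Δ j ^ 2 ≤ ∑ i, (X.mulVec Δ) i ^ 2) :
    (∀ (Δ : Fin p → ℝ) (v : Finset (Fin p) → Fin p → ℝ) (J : Finset (Finset (Fin p))),
      J ⊆ G → IsMinDecomp G Δ v →
      Real.sqrt (ρ / ((G.card : ℝ) * (Goverlap G : ℝ))) * ∑ g ∈ J, l2norm (v g) ≤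
        Real.sqrt ((∑ i, (X.mulVec Δ) i ^ 2) / n)) ∧
    (∀ s : ℕ, 1 ≤ s → s ≤ G.card →
      0 < Real.sqrt (ρ / ((G.card : ℝ) * (Goverlap G : ℝ))) ∧
      ∀ (J : Finset (Finset (Fin p))), J ⊆ G → J.card ≤ s →
        ∀ (Δ : Fin p → ℝ), Δ ≠ 0 →
          ∀ v : Finset (Fin p) → Fin p → ℝ, IsMinDecomp G Δ v →
            ∑ g ∈ G \ J, l2norm (v g) ≤ 3 * ∑ g ∈ J, l2norm (v g) →
            Real.sqrt (ρ / ((G.card : ℝ) * (Goverlap G : ℝ))) * Real.sqrt n *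
                ∑ g ∈ J, l2norm (v g) ≤
              Real.sqrt (∑ i, (X.mulVec Δ) i ^ 2)) := by
  have hG : 0 < #G := card_pos.2 ⟨_, (hcover ⟨0, hp⟩).choose_spec.1⟩
  have hoverlap : (1 : ℝ) ≤ Goverlap G := by exact_mod_cast Goverlap_pos G hp hcover
  have key : ∀ (Δ : Fin p → ℝ) (v : Finset (Fin p) → Fin p → ℝ) (J : Finset (Finset (Fin p))),
      J ⊆ G → IsMinDecomp G Δ v →
      √(ρ / (#G * Goverlap G)) * ∑ g ∈ J, l2norm (v g) ≤ √((∑ i, (X.mulVec Δ) i ^ 2) / n) := by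
    intro Δ v J hJ hv
    calc √(ρ / (#G * Goverlap G)) * ∑ g ∈ J, l2norm (v g)
        ≤ √(ρ / (#G * Goverlap G)) * (√(#G : ℝ) * l2norm Δ) := by
          gcongr
          exact (hv.sum_l2norm_le_overlapNorm hJ).trans
            (overlapNorm_le_sqrt_card_mul_l2norm hcover Δ)
      _ = √(ρ / (#G * Goverlap G)) * √(#G : ℝ) * l2norm Δ := (mul_assoc ..).symm
      _ ≤ √ρ * l2norm Δ := by
          gcongr
          exacts [l2norm_nonneg Δ, sqrt_div_mul_mul_sqrt_le hρ.le (Nat.cast_nonneg _) hoverlap]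
      _ ≤ √((∑ i, (X.mulVec Δ) i ^ 2) / n) := sqrt_mul_l2norm_le_of_min_eigenvalue hn X hρ.le hX Δ
  refine ⟨key, fun s _ _ => ⟨by positivity, fun J hJ _ Δ _ v hv _ => ?_⟩⟩
  calc √(ρ / (#G * Goverlap G)) * √(n : ℝ) * ∑ g ∈ J, l2norm (v g)
      = √(n : ℝ) * (√(ρ / (#G * Goverlap G)) * ∑ g ∈ J, l2norm (v g)) := by ring
    _ ≤ √(n : ℝ) * √((∑ i, (X.mulVec Δ) i ^ 2) / n) := by gcongr; exact key Δ v J hJ hv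
    _ = √(∑ i, (X.mulVec Δ) i ^ 2) := by
        rw [← Real.sqrt_mul (Nat.cast_nonneg _), mul_div_cancel₀ _ (by positivity)]

/-- if the smallest eigenvalue of `XᵀX/n` is at least `ρ > 0`
(i.e. `ΔᵀXᵀXΔ ≥ n·ρ·‖Δ‖₂²` for all `Δ`), then for every `Δ`, every norm-minimizing
decomposition of `Δ` and every `J ⊆ G`,
`√(ΔᵀXᵀXΔ/n) ≥ √(ρ/(M·G_overlap)) · ∑_{g∈J}‖v_g‖₂`; in particular, the restricted
eigenvalue condition holds with `κ(s) = √(ρ/(M·G_overlap))` for every `1 ≤ s ≤ M`. -/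
theorem restricted_eigenvalue_from_min_eigenvalue {p n : ℕ} (hp : 1 ≤ p) (hn : 1 ≤ n)
    (G : Finset (Finset (Fin p))) (hGne : G.Nonempty)
    (hcover : ∀ i : Fin p, ∃ g ∈ G, i ∈ g)
    (X : Matrix (Fin n) (Fin p) ℝ) (ρ : ℝ) (hρ : 0 < ρ)
    (hX : ∀ Δ : Fin p → ℝ, (n : ℝ) * ρ * ∑ j, Δ j ^ 2 ≤ ∑ i, (X.mulVec Δ) i ^ 2) :
    (∀ (Δ : Fin p → ℝ) (v : Finset (Fin p) → Fin p → ℝ) (J : Finset (Finset (Fin p))),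
      J ⊆ G → IsMinDecomp G Δ v →
      Real.sqrt (ρ / ((G.card : ℝ) * (Goverlap G : ℝ))) * ∑ g ∈ J, l2norm (v g) ≤
        Real.sqrt ((∑ i, (X.mulVec Δ) i ^ 2) / n)) ∧
    (∀ s : ℕ, 1 ≤ s → s ≤ G.card →
      0 < Real.sqrt (ρ / ((G.card : ℝ) * (Goverlap G : ℝ))) ∧
      ∀ (J : Finset (Finset (Fin p))), J ⊆ G → J.card ≤ s →
        ∀ (Δ : Fin p → ℝ), Δ ≠ 0 →
          ∀ v : Finset (Fin p) → Fin p → ℝ, IsMinDecomp G Δ v →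
            ∑ g ∈ G \ J, l2norm (v g) ≤ 3 * ∑ g ∈ J, l2norm (v g) →
            Real.sqrt (ρ / ((G.card : ℝ) * (Goverlap G : ℝ))) * Real.sqrt n *
                ∑ g ∈ J, l2norm (v g) ≤
              Real.sqrt (∑ i, (X.mulVec Δ) i ^ 2)) :=
  restricted_eigenvalue_from_min_eigenvalue_general hp hn G hcover X ρ hρ hX
end

section
/- Let p = 5 and G = {{1,2}, {3,4}, {1,2,3,4}, {5}}. Let β ∈ ℝ⁵ with (β₁, β₂) ≠ (0,0) and (β₃, β₄) ≠ (0,0). Then ‖β‖_{2,1,G} = √(β₁² + β₂² + β₃² + β₄²) + |β₅|, and the unique norm-minimizing G-decomposition of β is v_{{1,2}} = 0, v_{{3,4}} = 0, v_{{1,2,3,4}} = (β₁, β₂, β₃, β₄, 0), v_{{5}} = (0, 0, 0, 0, β₅). In particular, the nested groups {1,2} and {3,4} are never used in a norm-minimizing decomposition of such β. -/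
open Finset

/-!
Any decomposition must carry `β₄` on the group `{4}` and split `w = (β₀, β₁, β₂, β₃, 0)` among
the three groups inside `{0, 1, 2, 3}`, so by the triangle inequality its cost is at least
`‖w‖ + |β₄|`, which putting all of `w` on `{0, 1, 2, 3}` attains. Equality in the triangle
inequality of the strictly convex ℓ² norm puts every piece on the ray of `w`; the piece on
`{0, 1}` vanishes at the coordinates 2 and 3, where `w` does not vanish identically, so it is
zero, and symmetrically for `{2, 3}`.
-/

theorem SameRay.of_norm_sum_eq_sum_norm {ι E : Type*} [NormedAddCommGroup E] [NormedSpace ℝ E]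
    [StrictConvexSpace ℝ E] {s : Finset ι} {f : ι → E}
    (h : ‖∑ j ∈ s, f j‖ = ∑ j ∈ s, ‖f j‖) {i : ι} (hi : i ∈ s) :
    SameRay ℝ (f i) (∑ j ∈ s, f j) := by
  classical
  rw [← add_sum_erase s f hi] at h ⊢
  rw [← add_sum_erase s (‖f ·‖) hi] at h
  have hrest : SameRay ℝ (f i) (∑ j ∈ s.erase i, f j) := by
    refine sameRay_iff_norm_add.mpr (le_antisymm (norm_add_le _ _) ?_)
    linarith [norm_sum_le (s.erase i) f, norm_add_le (f i) (∑ j ∈ s.erase i, f j)]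
  exact (SameRay.refl (f i)).add_right hrest

theorem SameRay.eq_zero_of_apply_eq_zero {ι : Type*} {x y : ι → ℝ} (h : SameRay ℝ x y)
    {j : ι} (hxj : x j = 0) (hyj : y j ≠ 0) : x = 0 := by
  rcases h with hx | hy | ⟨r₁, r₂, -, hr₂, hxy⟩
  · exact hx
  · exact absurd (congrFun hy j) hyj
  · have := congrFun hxy j
    simp only [Pi.smul_apply, smul_eq_mul, hxj, mul_zero] at this
    exact absurd this.symm (mul_ne_zero hr₂.ne' hyj)

theorem l2norm_eq_norm_toLp {p : ℕ} (v : Fin p → ℝ) :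
    l2norm v = ‖WithLp.toLp 2 v‖ := by
  simp [l2norm, EuclideanSpace.norm_eq]

theorem l2norm_zero {p : ℕ} : l2norm (0 : Fin p → ℝ) = 0 := by
  simp [l2norm]

theorem l2norm_sum_le {ι : Type*} {p : ℕ} (s : Finset ι) (f : ι → Fin p → ℝ) :
    l2norm (∑ i ∈ s, f i) ≤ ∑ i ∈ s, l2norm (f i) := by
  simpa only [l2norm_eq_norm_toLp, WithLp.toLp_sum] using
    norm_sum_le s fun i => WithLp.toLp 2 (f i)

theorem SameRay.of_l2norm_sum_eq {ι : Type*} {p : ℕ} {s : Finset ι} {f : ι → Fin p → ℝ}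
    (h : l2norm (∑ j ∈ s, f j) = ∑ j ∈ s, l2norm (f j)) {i : ι} (hi : i ∈ s) :
    SameRay ℝ (f i) (∑ j ∈ s, f j) := by
  simp only [l2norm_eq_norm_toLp, WithLp.toLp_sum] at h
  simpa using (SameRay.of_norm_sum_eq_sum_norm h hi).map
    (WithLp.linearEquiv 2 ℝ (Fin p → ℝ)).toLinearMap

theorem overlapNorm_eq_of_isDecomp {p : ℕ} {G : Finset (Finset (Fin p))} {β : Fin p → ℝ}
    {v : Finset (Fin p) → Fin p → ℝ} {c : ℝ} (hv : IsDecomp G β v)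
    (hcost : ∑ g ∈ G, l2norm (v g) = c)
    (hle : ∀ u, IsDecomp G β u → c ≤ ∑ g ∈ G, l2norm (u g)) :
    overlapNorm G β = c :=
  IsLeast.csInf_eq ⟨⟨v, hv, hcost.symm⟩, by rintro _ ⟨u, hu, rfl⟩; exact hle u hu⟩

section ExampleGroups

def blockGroups : Finset (Finset (Fin 5)) := {{0, 1}, {2, 3}, {0, 1, 2, 3}}

def exampleGroups : Finset (Finset (Fin 5)) := {{0, 1}, {2, 3}, {0, 1, 2, 3}, {4}}

def optimalDecomp (β : Fin 5 → ℝ) : Finset (Fin 5) → Fin 5 → ℝ := fun g =>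
  if g = ({0, 1, 2, 3} : Finset (Fin 5)) then ![β 0, β 1, β 2, β 3, 0]
  else if g = ({4} : Finset (Fin 5)) then ![0, 0, 0, 0, β 4]
  else 0

theorem sum_exampleGroups {M : Type*} [AddCommMonoid M] (f : Finset (Fin 5) → M) :
    ∑ g ∈ exampleGroups, f g = f {4} + ∑ g ∈ blockGroups, f g := by
  rw [show exampleGroups = insert {4} blockGroups by decide, sum_insert (by decide)]

theorem sum_blockGroups {M : Type*} [AddCommMonoid M] (f : Finset (Fin 5) → M) :
    ∑ g ∈ blockGroups, f g = f {0, 1} + f {2, 3} + f {0, 1, 2, 3} := by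
  rw [blockGroups, sum_insert (by decide), sum_insert (by decide), sum_singleton, add_assoc]

theorem l2norm_block (a b c d : ℝ) :
    l2norm ![a, b, c, d, 0] = Real.sqrt (a ^ 2 + b ^ 2 + c ^ 2 + d ^ 2) := by
  simp [l2norm, Fin.sum_univ_five]

theorem l2norm_last (x : ℝ) : l2norm ![0, 0, 0, 0, x] = |x| := by
  simp [l2norm, Fin.sum_univ_five, Real.sqrt_sq_eq_abs]

variable {β : Fin 5 → ℝ} {v : Finset (Fin 5) → Fin 5 → ℝ}

theorem isDecomp_optimalDecomp : IsDecomp exampleGroups β (optimalDecomp β) := by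
  refine ⟨?_, ?_⟩
  · intro g hg j hj
    simp only [exampleGroups, mem_insert, mem_singleton] at hg
    rcases hg with rfl | rfl | rfl | rfl <;> fin_cases j <;> simp_all +decide [optimalDecomp]
  · funext j
    fin_cases j <;> simp +decide [sum_exampleGroups, sum_blockGroups, optimalDecomp]

theorem cost_optimalDecomp :
    ∑ g ∈ exampleGroups, l2norm (optimalDecomp β g)
      = Real.sqrt (β 0 ^ 2 + β 1 ^ 2 + β 2 ^ 2 + β 3 ^ 2) + |β 4| := by
  simp +decide [sum_exampleGroups, sum_blockGroups, optimalDecomp, l2norm_block, l2norm_last,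
    l2norm_zero, add_comm]

theorem IsDecomp.split_exampleGroups (hv : IsDecomp exampleGroups β v) :
    v {4} = ![0, 0, 0, 0, β 4] ∧ ∑ g ∈ blockGroups, v g = ![β 0, β 1, β 2, β 3, 0] := by
  obtain ⟨hsupp, rfl⟩ := hv
  have h01 : ∀ j ∉ ({0, 1} : Finset (Fin 5)), v {0, 1} j = 0 := hsupp _ (by decide)
  have h23 : ∀ j ∉ ({2, 3} : Finset (Fin 5)), v {2, 3} j = 0 := hsupp _ (by decide)
  have h0123 : ∀ j ∉ ({0, 1, 2, 3} : Finset (Fin 5)), v {0, 1, 2, 3} j = 0 := hsupp _ (by decide)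
  have h4 : ∀ j ∉ ({4} : Finset (Fin 5)), v {4} j = 0 := hsupp _ (by decide)
  constructor <;> funext j <;> fin_cases j <;>
    simp [sum_exampleGroups, sum_blockGroups, h01, h23, h0123, h4]

theorem IsDecomp.sqrt_add_abs_le_cost (hv : IsDecomp exampleGroups β v) :
    Real.sqrt (β 0 ^ 2 + β 1 ^ 2 + β 2 ^ 2 + β 3 ^ 2) + |β 4|
      ≤ ∑ g ∈ exampleGroups, l2norm (v g) := by
  obtain ⟨h4, hblock⟩ := hv.split_exampleGroups
  rw [sum_exampleGroups, h4, l2norm_last, ← l2norm_block, ← hblock]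
  linarith [l2norm_sum_le blockGroups v]

theorem IsDecomp.eq_optimalDecomp_of_cost_le (hv : IsDecomp exampleGroups β v)
    (h12 : (β 0, β 1) ≠ (0, 0)) (h34 : (β 2, β 3) ≠ (0, 0))
    (hcost : ∑ g ∈ exampleGroups, l2norm (v g)
      ≤ Real.sqrt (β 0 ^ 2 + β 1 ^ 2 + β 2 ^ 2 + β 3 ^ 2) + |β 4|) :
    ∀ g ∈ exampleGroups, v g = optimalDecomp β g := by
  obtain ⟨h4, hblock⟩ := hv.split_exampleGroups
  rw [sum_exampleGroups, h4, l2norm_last] at hcost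
  have htight : l2norm (∑ g ∈ blockGroups, v g) = ∑ g ∈ blockGroups, l2norm (v g) := by
    refine le_antisymm (l2norm_sum_le _ _) ?_
    rw [hblock, l2norm_block]
    linarith
  have hvanish : ∀ g ∈ blockGroups, ∀ j ∉ g, ![β 0, β 1, β 2, β 3, 0] j ≠ 0 → v g = 0 :=
    fun g hg j hj hβj => (hblock ▸ SameRay.of_l2norm_sum_eq htight hg).eq_zero_of_apply_eq_zero
      (hv.1 g ((by decide : blockGroups ⊆ exampleGroups) hg) j hj) hβj
  have h01 : v {0, 1} = 0 := by
    obtain h | h : β 2 ≠ 0 ∨ β 3 ≠ 0 := not_and_or.mp fun h => h34 (Prod.ext h.1 h.2)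
    exacts [hvanish _ (by decide) 2 (by decide) h, hvanish _ (by decide) 3 (by decide) h]
  have h23 : v {2, 3} = 0 := by
    obtain h | h : β 0 ≠ 0 ∨ β 1 ≠ 0 := not_and_or.mp fun h => h12 (Prod.ext h.1 h.2)
    exacts [hvanish _ (by decide) 0 (by decide) h, hvanish _ (by decide) 1 (by decide) h]
  have h0123 : v {0, 1, 2, 3} = ![β 0, β 1, β 2, β 3, 0] := by
    simpa [sum_blockGroups, h01, h23] using hblock
  intro g hg
  simp only [exampleGroups, mem_insert, mem_singleton] at hg
  rcases hg with rfl | rfl | rfl | rfl <;> simp +decide [optimalDecomp, h01, h23, h0123, h4]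

end ExampleGroups

/-- for `p = 5` and `G = {{1,2},{3,4},{1,2,3,4},{5}}` (0-indexed here as
`{{0,1},{2,3},{0,1,2,3},{4}}`), if `(β₁,β₂) ≠ (0,0)` and `(β₃,β₄) ≠ (0,0)` then
`‖β‖_{2,1,G} = √(β₁²+β₂²+β₃²+β₄²) + |β₅|`, and the unique norm-minimizing decomposition
puts all the mass on the big group `{1,2,3,4}` and on `{5}`, never using the nested
groups `{1,2}` and `{3,4}`. -/
theorem nested_groups_never_used (β : Fin 5 → ℝ)
    (h12 : (β 0, β 1) ≠ (0, 0)) (h34 : (β 2, β 3) ≠ (0, 0)) :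
    let G : Finset (Finset (Fin 5)) :=
      {({0, 1} : Finset (Fin 5)), {2, 3}, {0, 1, 2, 3}, {4}}
    let vstar : Finset (Fin 5) → Fin 5 → ℝ := fun g =>
      if g = ({0, 1, 2, 3} : Finset (Fin 5)) then ![β 0, β 1, β 2, β 3, 0]
      else if g = ({4} : Finset (Fin 5)) then ![0, 0, 0, 0, β 4]
      else 0
    overlapNorm G β = Real.sqrt (β 0 ^ 2 + β 1 ^ 2 + β 2 ^ 2 + β 3 ^ 2) + |β 4| ∧
    IsMinDecomp G β vstar ∧
    ∀ v : Finset (Fin 5) → Fin 5 → ℝ, IsMinDecomp G β v → ∀ g ∈ G, v g = vstar g := by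
  intro G vstar
  have hnorm : overlapNorm exampleGroups β = _ :=
    overlapNorm_eq_of_isDecomp isDecomp_optimalDecomp cost_optimalDecomp
      fun u hu => hu.sqrt_add_abs_le_cost
  exact ⟨hnorm, ⟨isDecomp_optimalDecomp, cost_optimalDecomp.trans hnorm.symm⟩,
    fun v hv => hv.1.eq_optimalDecomp_of_cost_le h12 h34 (hv.2.trans hnorm).le⟩
end
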